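/- In a star-continuous partially additive Kleene algebra, with A ⊙ B = {a·b | a ∈ A, b ∈ B}, the star-ideal generated by a product satisfies ⟨A ⊙ B⟩ = ⟨⟨A⟩ ⊙ B⟩ = ⟨A ⊙ ⟨B⟩⟩. -/

import Mathlib

/-- A partially additive Kleene algebra: partial `+` (via `summable`), total `·`, `*`,
constants 0 and 1, satisfying the PKA axioms. -/
structure PKA (K : Type*) where
  summable : K → K → Prop
  add : K → K → K
  mul : K → K → K
  star : K → K
  zero : K
  one : K
  add_assoc : ∀ x y z, summable x y → summable (add x y) z → summable y z →
    summable x (add y z) ∧ add (add x y) z = add x (add y z)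
  add_comm : ∀ x y, summable x y → summable y x ∧ add x y = add y x
  summable_zero : ∀ x, summable x zero
  add_zero : ∀ x, add x zero = x
  summable_self : ∀ x, summable x x
  add_self : ∀ x, add x x = x
  mul_assoc : ∀ x y z, mul x (mul y z) = mul (mul x y) z
  one_mul : ∀ x, mul one x = x
  mul_one : ∀ x, mul x one = x
  left_distrib : ∀ x y z, summable x y →
    summable (mul z x) (mul z y) ∧ mul z (add x y) = add (mul z x) (mul z y)
  right_distrib : ∀ x y z, summable x y →
    summable (mul x z) (mul y z) ∧ mul (add x y) z = add (mul x z) (mul y z)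
  zero_mul : ∀ x, mul zero x = zero
  mul_zero : ∀ x, mul x zero = zero
  one_le_star : ∀ x, summable one (star x) ∧ add one (star x) = star x
  mul_star_le_star : ∀ x,
    summable (mul x (star x)) (star x) ∧ add (mul x (star x)) (star x) = star x
  star_mul_le_star : ∀ x,
    summable (mul (star x) x) (star x) ∧ add (mul (star x) x) (star x) = star x
  star_ind_left : ∀ a x, (summable (mul a x) x ∧ add (mul a x) x = x) →
    summable (mul (star a) x) x ∧ add (mul (star a) x) x = x
  star_ind_right : ∀ a x, (summable (mul x a) x ∧ add (mul x a) x = x) →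
    summable (mul x (star a)) x ∧ add (mul x (star a)) x = x

/-- The natural order on a PKA: `a ≤ b` iff `a` is summable with `b` and `a + b = b`. -/
def PKA.le {K : Type*} (P : PKA K) (a b : K) : Prop :=
  P.summable a b ∧ P.add a b = b

/-- Powers: `b^0 = 1`, `b^(n+1) = b·b^n`. -/
def PKA.pow {K : Type*} (P : PKA K) (b : K) : ℕ → K
  | 0 => P.one
  | n + 1 => P.mul b (P.pow b n)

/-- Star-continuity: `a·b*·c` is the least upper bound of `{a·b^n·c | n < ω}`. -/
def PKA.StarContinuous {K : Type*} (P : PKA K) : Prop :=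
  ∀ a b c,
    (∀ n, P.le (P.mul a (P.mul (P.pow b n) c)) (P.mul a (P.mul (P.star b) c))) ∧
    (∀ w, (∀ n, P.le (P.mul a (P.mul (P.pow b n) c)) w) →
      P.le (P.mul a (P.mul (P.star b) c)) w)

/-- A star-ideal: nonempty, closed under defined sums, downward closed,
and closed under the star rule. -/
def PKA.IsStarIdeal {K : Type*} (P : PKA K) (A : Set K) : Prop :=
  A.Nonempty ∧
  (∀ a ∈ A, ∀ b ∈ A, P.summable a b → P.add a b ∈ A) ∧
  (∀ x y, y ∈ A → P.le x y → x ∈ A) ∧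
  (∀ a b c, (∀ n, P.mul a (P.mul (P.pow b n) c) ∈ A) →
    P.mul a (P.mul (P.star b) c) ∈ A)

/-- The star-ideal generated by `A`: the intersection of all star-ideals containing `A`. -/
def PKA.gen {K : Type*} (P : PKA K) (A : Set K) : Set K :=
  ⋂₀ {I | P.IsStarIdeal I ∧ A ⊆ I}

/-!
If `I` is a star-ideal then so is `{a | a·b ∈ I}`, by right distributivity and associativity
(the star rule for `u·v*·w` becomes the star rule for `u·v*·(w·b)`), and symmetrically for
`{b | a·b ∈ I}`. Taking `I = ⟨A ⊙ B⟩`, these sets contain `A` (resp. `B`), hence `⟨A⟩` (resp. `⟨B⟩`),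
so `⟨A⟩ ⊙ B` and `A ⊙ ⟨B⟩` lie in `⟨A ⊙ B⟩`; the reverse inclusions are monotonicity of `⟨·⟩`.
-/

namespace PKA

variable {K : Type*}

theorem mul_le_mul_right {P : PKA K} {x y : K} (b : K) (hxy : P.le x y) :
    P.le (P.mul x b) (P.mul y b) := by
  obtain ⟨hs, he⟩ := P.right_distrib x y b hxy.1
  exact ⟨hs, by rw [← he, hxy.2]⟩

theorem mul_le_mul_left {P : PKA K} {x y : K} (a : K) (hxy : P.le x y) :
    P.le (P.mul a x) (P.mul a y) := by
  obtain ⟨hs, he⟩ := P.left_distrib x y a hxy.1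
  exact ⟨hs, by rw [← he, hxy.2]⟩

namespace IsStarIdeal

variable {P : PKA K} {I : Set K}

theorem zero_mem (hI : P.IsStarIdeal I) : P.zero ∈ I := by
  obtain ⟨⟨a, ha⟩, -, hdown, -⟩ := hI
  obtain ⟨hs, he⟩ := P.add_comm a P.zero (P.summable_zero a)
  exact hdown _ a ha ⟨hs, by rw [← he, P.add_zero]⟩

theorem preimage_mul_right (hI : P.IsStarIdeal I) (b : K) :
    P.IsStarIdeal {a | P.mul a b ∈ I} := by
  obtain ⟨-, hadd, hdown, hstar⟩ := id hI
  refine ⟨⟨P.zero, ?_⟩, ?_, ?_, ?_⟩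
  · simpa only [Set.mem_ofPred_eq, P.zero_mul] using hI.zero_mem
  · intro a₁ h₁ a₂ h₂ hs
    obtain ⟨hs', he⟩ := P.right_distrib a₁ a₂ b hs
    simpa only [Set.mem_ofPred_eq, he] using hadd _ h₁ _ h₂ hs'
  · exact fun x y hy hxy => hdown _ _ hy (mul_le_mul_right b hxy)
  · intro u v w hn
    have reassoc : ∀ z, P.mul (P.mul u (P.mul z w)) b = P.mul u (P.mul z (P.mul w b)) :=
      fun z => by rw [← P.mul_assoc, ← P.mul_assoc]
    simpa only [Set.mem_ofPred_eq, reassoc] using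
      hstar u v (P.mul w b) fun n => by simpa only [Set.mem_ofPred_eq, reassoc] using hn n

theorem preimage_mul_left (hI : P.IsStarIdeal I) (a : K) :
    P.IsStarIdeal {b | P.mul a b ∈ I} := by
  obtain ⟨-, hadd, hdown, hstar⟩ := id hI
  refine ⟨⟨P.zero, ?_⟩, ?_, ?_, ?_⟩
  · simpa only [Set.mem_ofPred_eq, P.mul_zero] using hI.zero_mem
  · intro b₁ h₁ b₂ h₂ hs
    obtain ⟨hs', he⟩ := P.left_distrib b₁ b₂ a hs
    simpa only [Set.mem_ofPred_eq, he] using hadd _ h₁ _ h₂ hs'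
  · exact fun x y hy hxy => hdown _ _ hy (mul_le_mul_left a hxy)
  · intro u v w hn
    simpa only [Set.mem_ofPred_eq, P.mul_assoc] using
      hstar (P.mul a u) v w fun n => by simpa only [Set.mem_ofPred_eq, P.mul_assoc] using hn n

end IsStarIdeal

variable (P : PKA K)

theorem isStarIdeal_gen (A : Set K) : P.IsStarIdeal (P.gen A) := by
  refine ⟨⟨P.zero, fun I hI => hI.1.zero_mem⟩, ?_, ?_, ?_⟩
  · exact fun a ha b hb hs I hI => hI.1.2.1 a (ha I hI) b (hb I hI) hs
  · exact fun x y hy hxy I hI => hI.1.2.2.1 x y (hy I hI) hxy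
  · exact fun a b c hn I hI => hI.1.2.2.2 a b c fun n => hn n I hI

theorem subset_gen (A : Set K) : A ⊆ P.gen A :=
  fun _ hx _ hI => hI.2 hx

theorem gen_subset {A I : Set K} (hI : P.IsStarIdeal I) (hAI : A ⊆ I) : P.gen A ⊆ I :=
  Set.sInter_subset_of_mem ⟨hI, hAI⟩

theorem gen_mono {A B : Set K} (hAB : A ⊆ B) : P.gen A ⊆ P.gen B :=
  P.gen_subset (P.isStarIdeal_gen B) (hAB.trans (P.subset_gen B))

theorem gen_image2_mul_gen_left (A B : Set K) :
    P.gen (Set.image2 P.mul (P.gen A) B) = P.gen (Set.image2 P.mul A B) := by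
  refine subset_antisymm (P.gen_subset (P.isStarIdeal_gen _) ?_)
    (P.gen_mono (Set.image2_subset_right (P.subset_gen A)))
  rintro _ ⟨a, ha, b, hb, rfl⟩
  have hA : A ⊆ {a | P.mul a b ∈ P.gen (Set.image2 P.mul A B)} :=
    fun a' ha' => P.subset_gen _ (Set.mem_image2_of_mem ha' hb)
  exact P.gen_subset ((P.isStarIdeal_gen _).preimage_mul_right b) hA ha

theorem gen_image2_mul_gen_right (A B : Set K) :
    P.gen (Set.image2 P.mul A (P.gen B)) = P.gen (Set.image2 P.mul A B) := by
  refine subset_antisymm (P.gen_subset (P.isStarIdeal_gen _) ?_)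
    (P.gen_mono (Set.image2_subset_left (P.subset_gen B)))
  rintro _ ⟨a, ha, b, hb, rfl⟩
  have hB : B ⊆ {b | P.mul a b ∈ P.gen (Set.image2 P.mul A B)} :=
    fun b' hb' => P.subset_gen _ (Set.mem_image2_of_mem ha hb')
  exact P.gen_subset ((P.isStarIdeal_gen _).preimage_mul_left a) hB hb

end PKA

theorem pka_gen_prod_general {K : Type*} (P : PKA K) :
    ∀ A B : Set K,
      P.gen (Set.image2 P.mul A B) = P.gen (Set.image2 P.mul (P.gen A) B) ∧
      P.gen (Set.image2 P.mul A B) = P.gen (Set.image2 P.mul A (P.gen B)) :=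
  fun A B => ⟨(P.gen_image2_mul_gen_left A B).symm, (P.gen_image2_mul_gen_right A B).symm⟩

/-- With A ⊙ B the set of products a·b, gen (A ⊙ B) = gen (gen A ⊙ B) = gen (A ⊙ gen B)
in a star-continuous PKA. -/
theorem pka_gen_prod {K : Type*} (P : PKA K) (h : P.StarContinuous) :
    ∀ A B : Set K,
      P.gen (Set.image2 P.mul A B) = P.gen (Set.image2 P.mul (P.gen A) B) ∧
      P.gen (Set.image2 P.mul A B) = P.gen (Set.image2 P.mul A (P.gen B)) :=
  pka_gen_prod_general P
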